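/- arXiv:2603.04078 — 10 statements merged into one kernel-verified Lean document; each statement's English description precedes it below -/
import Mathlib

section
/- Let E be a real inner product space, let g, d ∈ E with g ≠ 0, let 0 < c₁ ≤ c₂, γ ∈ (0,1), δ ∈ (0,1), and let L > 2(1−γ)c₁/c₂². Let φ : E → ℝ satisfy, for every j ∈ ℕ, the Lipschitz-type model condition |φ(δʲ d) − φ(0) − δʲ⟨g, d⟩| ≤ (L/2)δ²ʲ‖d‖², and assume the gradient-related conditions ⟨g, d⟩ ≤ −c₁‖g‖² and ‖d‖ ≤ c₂‖g‖. Then there exists j ∈ ℕ such that the Armijo condition φ(δʲ d) ≤ φ(0) + γ δʲ⟨g, d⟩ holds; moreover, if j₀ is the least such j, the accepted step size η = δ^{j₀} satisfies η ≥ 2δ(1−γ)c₁/(L c₂²). -/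
open scoped RealInnerProductSpace

/-- For a gradient-related direction and a Lipschitz-type model with constant
`L > 2(1-γ)c₁/c₂²`, the Armijo backtracking line-search terminates: some step size `δʲ`
satisfies the Armijo condition, and the accepted (first successful) step size `η = δ^{j₀}`
satisfies `η ≥ 2δ(1-γ)c₁/(L c₂²)`. -/
theorem armijo_backtracking_terminates
    {E : Type*} [NormedAddCommGroup E] [InnerProductSpace ℝ E]
    (g d : E) (hg : g ≠ 0)
    (c₁ c₂ γ δ L : ℝ) (hc₁ : 0 < c₁) (hc₁₂ : c₁ ≤ c₂)
    (hγ : γ ∈ Set.Ioo (0 : ℝ) 1) (hδ : δ ∈ Set.Ioo (0 : ℝ) 1)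
    (hL : 2 * (1 - γ) * c₁ / c₂ ^ 2 < L)
    (φ : E → ℝ)
    (hlip : ∀ j : ℕ,
      |φ (δ ^ j • d) - φ 0 - δ ^ j * ⟪g, d⟫| ≤ L / 2 * δ ^ (2 * j) * ‖d‖ ^ 2)
    (hgr₁ : ⟪g, d⟫ ≤ -c₁ * ‖g‖ ^ 2)
    (hgr₂ : ‖d‖ ≤ c₂ * ‖g‖) :
    (∃ j : ℕ, φ (δ ^ j • d) ≤ φ 0 + γ * δ ^ j * ⟪g, d⟫) ∧
    ∀ j₀ : ℕ,
      (φ (δ ^ j₀ • d) ≤ φ 0 + γ * δ ^ j₀ * ⟪g, d⟫ ∧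
        ∀ j < j₀, ¬ (φ (δ ^ j • d) ≤ φ 0 + γ * δ ^ j * ⟪g, d⟫)) →
      δ ^ j₀ ≥ 2 * δ * (1 - γ) * c₁ / (L * c₂ ^ 2) := by
  obtain ⟨hγ0, hγ1⟩ := hγ
  obtain ⟨hδ0, hδ1⟩ := hδ
  have hc₂ : 0 < c₂ := hc₁.trans_le hc₁₂
  have hgn : 0 < ‖g‖ := norm_pos_iff.mpr hg
  have h1γ : 0 < 1 - γ := by linarith
  have hL0 : 0 < L := lt_trans (by positivity) hL
  have hLc : 2 * (1 - γ) * c₁ < L * c₂ ^ 2 := by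
    have := (div_lt_iff₀ (by positivity : (0:ℝ) < c₂ ^ 2)).mp hL
    linarith
  set t := 2 * (1 - γ) * c₁ / (L * c₂ ^ 2) with ht
  have ht0 : 0 < t := by positivity
  have hd2 : ‖d‖ ^ 2 ≤ c₂ ^ 2 * ‖g‖ ^ 2 := by
    have := pow_le_pow_left₀ (norm_nonneg d) hgr₂ 2
    simpa [mul_pow] using this
  have hsuff : ∀ j : ℕ, δ ^ j ≤ t → φ (δ ^ j • d) ≤ φ 0 + γ * δ ^ j * ⟪g, d⟫ := by
    intro j hj
    have h1 := (abs_le.mp (hlip j)).2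
    rw [pow_mul'] at h1
    have hdj : 0 < δ ^ j := pow_pos hδ0 j
    have hkey : δ ^ j * (L * c₂ ^ 2) ≤ 2 * (1 - γ) * c₁ :=
      (le_div_iff₀ (by positivity)).mp hj
    have h7 := mul_le_mul_of_nonneg_right hkey
      (show (0:ℝ) ≤ δ ^ j * ‖g‖ ^ 2 / 2 by positivity)
    have h3 := mul_le_mul_of_nonneg_left hd2
      (show (0:ℝ) ≤ L / 2 * (δ ^ j) ^ 2 by positivity)
    have h5 := mul_le_mul_of_nonneg_left hgr₁ hdj.le
    have h6 := mul_le_mul_of_nonneg_left h5 h1γ.le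
    nlinarith [h1, h3, h6, h7]
  constructor
  · obtain ⟨j, hj⟩ := exists_pow_lt_of_lt_one ht0 hδ1
    exact ⟨j, hsuff j hj.le⟩
  · rintro j₀ ⟨hj₀, hmin⟩
    match j₀ with
    | 0 =>
      rw [ge_iff_le, pow_zero]
      rw [div_le_one (by positivity)]
      nlinarith [hLc, mul_pos (mul_pos two_pos h1γ) hc₁]
    | (n+1) =>
      have hfail := hmin n (Nat.lt_succ_self n)
      have hgt : t < δ ^ n := by
        by_contra h
        exact hfail (hsuff n (le_of_not_gt h))
      calc 2 * δ * (1 - γ) * c₁ / (L * c₂ ^ 2) = δ * t := by rw [ht]; ring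
        _ ≤ δ * δ ^ n := mul_le_mul_of_nonneg_left hgt.le hδ0.le
        _ = δ ^ (n + 1) := (pow_succ' δ n).symm
end

section
/- Let E be a real inner product space, let f : ℕ → ℝ, η : ℕ → ℝ, and g, d : ℕ → E, and let f_low ∈ ℝ, γ ∈ (0,1), c₁ > 0, η̃ > 0. Assume for every k: f(k) ≥ f_low, ⟨g(k), d(k)⟩ ≤ −c₁‖g(k)‖², η(k) ≥ η̃, and the Armijo sufficient decrease f(k+1) ≤ f(k) + γ η(k) ⟨g(k), d(k)⟩. Then for every K ∈ ℕ, ∑_{k=0}^{K−1} ‖g(k)‖² ≤ (f(0) − f_low)/(γ c₁ η̃). -/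
open scoped RealInnerProductSpace

/-- For a line-search method with Armijo sufficient decrease, step sizes bounded
below by `η̃ > 0`, gradient-related directions (first condition) and objective bounded below,
the sum of squared gradient norms is bounded by `(f 0 - f_low)/(γ c₁ η̃)`. -/
theorem sum_sq_grad_norm_bound
    {E : Type*} [NormedAddCommGroup E] [InnerProductSpace ℝ E]
    (f : ℕ → ℝ) (η : ℕ → ℝ) (g d : ℕ → E)
    (flow : ℝ) (γ c₁ ηtilde : ℝ)
    (hγ : γ ∈ Set.Ioo (0 : ℝ) 1) (hc₁ : 0 < c₁) (hηt : 0 < ηtilde)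
    (hflow : ∀ k, flow ≤ f k)
    (hgr₁ : ∀ k, ⟪g k, d k⟫ ≤ -c₁ * ‖g k‖ ^ 2)
    (hη : ∀ k, ηtilde ≤ η k)
    (harmijo : ∀ k, f (k + 1) ≤ f k + γ * η k * ⟪g k, d k⟫) :
    ∀ K : ℕ, ∑ k ∈ Finset.range K, ‖g k‖ ^ 2 ≤ (f 0 - flow) / (γ * c₁ * ηtilde) := by
  intro K
  obtain ⟨hγ0, hγ1⟩ := hγ
  have hC : 0 < γ * c₁ * ηtilde := by positivity
  have key : ∀ k, γ * c₁ * ηtilde * ‖g k‖ ^ 2 ≤ f k - f (k + 1) := by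
    intro k
    have h1 := harmijo k
    have h2 := hgr₁ k
    have h3 := hη k
    have hg : (0 : ℝ) ≤ ‖g k‖ ^ 2 := by positivity
    have hneg : ⟪g k, d k⟫ ≤ 0 := h2.trans (by nlinarith)
    have h4 : γ * η k * ⟪g k, d k⟫ ≤ γ * ηtilde * ⟪g k, d k⟫ := by
      nlinarith [mul_nonneg (mul_nonneg hγ0.le (sub_nonneg.2 h3)) (neg_nonneg.2 hneg)]
    have h5 : γ * ηtilde * ⟪g k, d k⟫ ≤ γ * ηtilde * (-c₁ * ‖g k‖ ^ 2) :=
      mul_le_mul_of_nonneg_left h2 (by positivity)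
    nlinarith
  have hsum : γ * c₁ * ηtilde * ∑ k ∈ Finset.range K, ‖g k‖ ^ 2 ≤ f 0 - f K := by
    rw [Finset.mul_sum]
    calc ∑ k ∈ Finset.range K, γ * c₁ * ηtilde * ‖g k‖ ^ 2
        ≤ ∑ k ∈ Finset.range K, (f k - f (k + 1)) :=
          Finset.sum_le_sum fun k _ => key k
      _ = f 0 - f K := by rw [Finset.sum_range_sub' f]
  rw [le_div_iff₀ hC]
  have := hflow K
  linarith [hsum]
end

section
/- Let E be a real inner product space, let f : ℕ → ℝ, η : ℕ → ℝ, and g, d : ℕ → E, and let f_low ∈ ℝ, γ ∈ (0,1), c₁ > 0, η̃ > 0, ε > 0. Assume for every k: f(k) ≥ f_low, ⟨g(k), d(k)⟩ ≤ −c₁‖g(k)‖², η(k) ≥ η̃, and f(k+1) ≤ f(k) + γ η(k) ⟨g(k), d(k)⟩. Then the set {k ∈ ℕ : ‖g(k)‖ > ε} is finite and its cardinality is at most (f(0) − f_low)/(γ c₁ η̃) · ε⁻². -/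
open scoped RealInnerProductSpace

/-- Under the Armijo sufficient decrease with step sizes bounded below by
`η̃ > 0`, the first gradient-related condition, and objective bounded below, the set of
iterations with `‖g k‖ > ε` is finite with cardinality at most
`(f 0 - f_low)/(γ c₁ η̃) · ε⁻²`. -/
theorem card_large_grad_iterations_bound
    {E : Type*} [NormedAddCommGroup E] [InnerProductSpace ℝ E]
    (f : ℕ → ℝ) (η : ℕ → ℝ) (g d : ℕ → E)
    (flow : ℝ) (γ c₁ ηtilde ε : ℝ)
    (hγ : γ ∈ Set.Ioo (0 : ℝ) 1) (hc₁ : 0 < c₁) (hηt : 0 < ηtilde) (hε : 0 < ε)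
    (hflow : ∀ k, flow ≤ f k)
    (hgr₁ : ∀ k, ⟪g k, d k⟫ ≤ -c₁ * ‖g k‖ ^ 2)
    (hη : ∀ k, ηtilde ≤ η k)
    (harmijo : ∀ k, f (k + 1) ≤ f k + γ * η k * ⟪g k, d k⟫) :
    {k : ℕ | ε < ‖g k‖}.Finite ∧
      (Nat.card {k : ℕ | ε < ‖g k‖} : ℝ) ≤ (f 0 - flow) / (γ * c₁ * ηtilde) * ε⁻¹ ^ 2 := by
  obtain ⟨hγ0, hγ1⟩ := hγ
  set a : ℕ → ℝ := fun k => γ * c₁ * ηtilde * ‖g k‖ ^ 2 with ha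
  have ha0 : ∀ k, 0 ≤ a k := fun k => by positivity
  have hstep : ∀ k, a k ≤ f k - f (k + 1) := by
    intro k
    have h1 : γ * η k * ⟪g k, d k⟫ ≤ γ * η k * (-c₁ * ‖g k‖ ^ 2) := by
      have hηk : 0 < η k := lt_of_lt_of_le hηt (hη k)
      apply mul_le_mul_of_nonneg_left (hgr₁ k) (by positivity)
    have h2 : γ * η k * (-c₁ * ‖g k‖ ^ 2) ≤ γ * ηtilde * (-c₁ * ‖g k‖ ^ 2) := by
      have hnn : 0 ≤ c₁ * ‖g k‖ ^ 2 := by positivity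
      nlinarith [mul_le_mul_of_nonneg_right (mul_le_mul_of_nonneg_left (hη k) hγ0.le) hnn]
    have := harmijo k
    simp only [ha]
    nlinarith
  have hsum : ∀ N, ∑ k ∈ Finset.range N, a k ≤ f 0 - flow := by
    intro N
    have tele : ∑ k ∈ Finset.range N, (f k - f (k + 1)) = f 0 - f N := by
      rw [Finset.sum_range_sub' f N]
    have h1 : ∑ k ∈ Finset.range N, a k ≤ ∑ k ∈ Finset.range N, (f k - f (k + 1)) :=
      Finset.sum_le_sum fun k _ => hstep k
    have := hflow N
    linarith [h1, tele ▸ h1]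
  -- key finite-subset bound
  have key : ∀ T : Finset ℕ, (↑T ⊆ {k : ℕ | ε < ‖g k‖}) →
      (T.card : ℝ) ≤ (f 0 - flow) / (γ * c₁ * ηtilde) * ε⁻¹ ^ 2 := by
    intro T hT
    have hN : ∀ k ∈ T, k ∈ Finset.range (T.sup id + 1) := by
      intro k hk
      exact Finset.mem_range.mpr (Nat.lt_succ_of_le (Finset.le_sup (f := id) hk))
    have hTsub : T ⊆ Finset.range (T.sup id + 1) := hN
    have h1 : ∑ k ∈ T, a k ≤ ∑ k ∈ Finset.range (T.sup id + 1), a k :=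
      Finset.sum_le_sum_of_subset_of_nonneg hTsub (fun k _ _ => ha0 k)
    have h2 : (T.card : ℝ) * (γ * c₁ * ηtilde * ε ^ 2) ≤ ∑ k ∈ T, a k := by
      have h := Finset.card_nsmul_le_sum T a (γ * c₁ * ηtilde * ε ^ 2) (fun k hk => by
        have hεk : ε < ‖g k‖ := hT hk
        have : ε ^ 2 ≤ ‖g k‖ ^ 2 := by nlinarith [norm_nonneg (g k)]
        simp only [ha]
        exact mul_le_mul_of_nonneg_left this (by positivity))
      rwa [nsmul_eq_mul] at h
    have h3 : (T.card : ℝ) * (γ * c₁ * ηtilde * ε ^ 2) ≤ f 0 - flow :=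
      le_trans h2 (le_trans h1 (hsum _))
    have hpos : 0 < γ * c₁ * ηtilde * ε ^ 2 := by positivity
    rw [div_mul_eq_mul_div, le_div_iff₀ (by positivity)]
    calc (T.card : ℝ) * (γ * c₁ * ηtilde) = (T.card : ℝ) * (γ * c₁ * ηtilde * ε ^ 2) * ε⁻¹ ^ 2 := by
          have hε' : ε ≠ 0 := ne_of_gt hε
          field_simp
      _ ≤ (f 0 - flow) * ε⁻¹ ^ 2 := by
          apply mul_le_mul_of_nonneg_right h3 (by positivity)
  have hfin : {k : ℕ | ε < ‖g k‖}.Finite := by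
    by_contra h
    have hinf : {k : ℕ | ε < ‖g k‖}.Infinite := h
    obtain ⟨T, hTsub, hTcard⟩ := hinf.exists_subset_card_eq
      (⌈(f 0 - flow) / (γ * c₁ * ηtilde) * ε⁻¹ ^ 2⌉₊ + 1)
    have := key T hTsub
    rw [hTcard] at this
    have h2 : ((f 0 - flow) / (γ * c₁ * ηtilde) * ε⁻¹ ^ 2) ≤ ⌈(f 0 - flow) / (γ * c₁ * ηtilde) * ε⁻¹ ^ 2⌉₊ := Nat.le_ceil _
    push_cast at this
    linarith
  refine ⟨hfin, ?_⟩
  have hcard : Nat.card {k : ℕ | ε < ‖g k‖} = hfin.toFinset.card := by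
    rw [Nat.card_eq_card_finite_toFinset hfin]
  rw [hcard]
  exact key hfin.toFinset (by simp)
end

section
/- Let E be a real inner product space, let f : ℕ → ℝ, η : ℕ → ℝ, and g, d : ℕ → E, and let f_low ∈ ℝ, γ ∈ (0,1), δ ∈ (0,1), 0 < c₁ ≤ c₂, L > 0, ε > 0. Assume for every k: f(k) ≥ f_low, ⟨g(k), d(k)⟩ ≤ −c₁‖g(k)‖², η(k) ≥ 2δ(1−γ)c₁/(L c₂²), and f(k+1) ≤ f(k) + γ η(k) ⟨g(k), d(k)⟩. Then the set {k ∈ ℕ : ‖g(k)‖ > ε} is finite and its cardinality is at most L c₂² (f(0) − f_low) / (2 δ γ (1−γ) c₁²) · ε⁻². -/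
open scoped RealInnerProductSpace

private lemma aux_div_identity (a b X e : ℝ) (ha : a ≠ 0) (hb : b ≠ 0) (he : e ≠ 0) :
    a * X / b * e⁻¹ ^ 2 = X / (b / a * e ^ 2) := by
  field_simp

/-- With the step-size lower bound `2δ(1-γ)c₁/(L c₂²)` guaranteed by the
Armijo backtracking line-search, the set of iterations with `‖g k‖ > ε` is finite with
cardinality at most `L c₂² (f 0 - f_low) / (2 δ γ (1-γ) c₁²) · ε⁻²`. -/
theorem card_large_grad_iterations_bound_backtracking
    {E : Type*} [NormedAddCommGroup E] [InnerProductSpace ℝ E]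
    (f : ℕ → ℝ) (η : ℕ → ℝ) (g d : ℕ → E)
    (flow : ℝ) (γ δ c₁ c₂ L ε : ℝ)
    (hγ : γ ∈ Set.Ioo (0 : ℝ) 1) (hδ : δ ∈ Set.Ioo (0 : ℝ) 1)
    (hc₁ : 0 < c₁) (hc₁₂ : c₁ ≤ c₂) (hL : 0 < L) (hε : 0 < ε)
    (hflow : ∀ k, flow ≤ f k)
    (hgr₁ : ∀ k, ⟪g k, d k⟫ ≤ -c₁ * ‖g k‖ ^ 2)
    (hη : ∀ k, 2 * δ * (1 - γ) * c₁ / (L * c₂ ^ 2) ≤ η k)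
    (harmijo : ∀ k, f (k + 1) ≤ f k + γ * η k * ⟪g k, d k⟫) :
    {k : ℕ | ε < ‖g k‖}.Finite ∧
      (Nat.card {k : ℕ | ε < ‖g k‖} : ℝ) ≤
        L * c₂ ^ 2 * (f 0 - flow) / (2 * δ * γ * (1 - γ) * c₁ ^ 2) * ε⁻¹ ^ 2 := by
  obtain ⟨hγ0, hγ1⟩ := hγ
  obtain ⟨hδ0, hδ1⟩ := hδ
  have hc₂ : 0 < c₂ := lt_of_lt_of_le hc₁ hc₁₂
  have h1γ : 0 < 1 - γ := by linarith
  set η₀ : ℝ := 2 * δ * (1 - γ) * c₁ / (L * c₂ ^ 2) with hη₀def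
  have hη₀pos : 0 < η₀ := by
    apply div_pos
    · positivity
    · positivity
  set C : ℝ := γ * η₀ * c₁ with hCdef
  have hCpos : 0 < C := by positivity
  clear_value C
  clear_value η₀
  -- each step does not increase f; large-gradient steps decrease it by at least C ε²
  have step : ∀ n, f (n + 1) ≤ f n - (if ε < ‖g n‖ then C * ε ^ 2 else 0) := by
    intro n
    have hηn := hη n
    have hgd := hgr₁ n
    have hηnpos : 0 < η n := lt_of_lt_of_le hη₀pos hηn
    by_cases h : ε < ‖g n‖
    · simp only [h, if_true]
      have h1 : γ * η n * ⟪g n, d n⟫ ≤ γ * η n * (-c₁ * ‖g n‖ ^ 2) := by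
        apply mul_le_mul_of_nonneg_left hgd (by positivity)
      have h2 : ε ^ 2 ≤ ‖g n‖ ^ 2 := by nlinarith
      have h3 : γ * η n * (-c₁ * ‖g n‖ ^ 2) ≤ -(C * ε ^ 2) := by
        have : C * ε ^ 2 ≤ γ * η n * (c₁ * ‖g n‖ ^ 2) := by
          rw [hCdef]
          have : γ * η₀ * (c₁ * ε ^ 2) ≤ γ * η n * (c₁ * ‖g n‖ ^ 2) := by
            apply mul_le_mul
            · nlinarith
            · nlinarith
            · positivity
            · positivity
          nlinarith [this]
        nlinarith
      have := harmijo n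
      linarith
    · simp only [h, if_false]
      have h1 : γ * η n * ⟪g n, d n⟫ ≤ 0 := by
        have : ⟪g n, d n⟫ ≤ 0 := le_trans hgd (by nlinarith [sq_nonneg ‖g n‖])
        have hpos : 0 < γ * η n := by positivity
        nlinarith
      have := harmijo n
      linarith
  -- cumulative decrease
  have key : ∀ n, f n + C * ε ^ 2 *
      ((Finset.range n).filter (fun k => ε < ‖g k‖)).card ≤ f 0 := by
    intro n
    induction n with
    | zero => simp
    | succ n ih =>
      have hs := step n
      rw [Finset.range_add_one, Finset.filter_insert]
      by_cases h : ε < ‖g n‖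
      · simp only [h, if_true]
        rw [Finset.card_insert_of_notMem (by simp)]
        push_cast
        simp only [h, if_true] at hs
        linarith
      · simp only [h, if_false]
        simp only [h, if_false] at hs
        linarith
  have bound : ∀ n, C * ε ^ 2 *
      ((Finset.range n).filter (fun k => ε < ‖g k‖)).card ≤ f 0 - flow := by
    intro n
    have := key n
    have := hflow n
    linarith
  -- finiteness
  have hfin : {k : ℕ | ε < ‖g k‖}.Finite := by
    by_contra hinf
    have hinf : {k : ℕ | ε < ‖g k‖}.Infinite := hinf
    set N : ℕ := ⌈(f 0 - flow) / (C * ε ^ 2)⌉₊ + 1 with hN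
    obtain ⟨t, hts, htcard⟩ := hinf.exists_subset_card_eq N
    obtain ⟨m, htm⟩ := t.exists_nat_subset_range
    have hsub : t ⊆ (Finset.range m).filter (fun k => ε < ‖g k‖) := by
      intro k hk
      exact Finset.mem_filter.mpr ⟨htm hk, hts hk⟩
    have h1 : (N : ℝ) * (C * ε ^ 2) ≤ f 0 - flow := by
      have := bound m
      have hle : (N : ℝ) ≤ ((Finset.range m).filter (fun k => ε < ‖g k‖)).card := by
        exact_mod_cast htcard ▸ Finset.card_le_card hsub
      have hmul := mul_le_mul_of_nonneg_right hle (le_of_lt (show (0:ℝ) < C * ε ^ 2 by positivity))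
      nlinarith
    have h2 : (N : ℝ) ≤ (f 0 - flow) / (C * ε ^ 2) := by
      rw [le_div_iff₀ (by positivity)]
      exact h1
    have h3 : (f 0 - flow) / (C * ε ^ 2) < N := by
      rw [hN]
      push_cast
      have := Nat.le_ceil ((f 0 - flow) / (C * ε ^ 2))
      linarith
    linarith
  refine ⟨hfin, ?_⟩
  obtain ⟨m, htm⟩ := hfin.toFinset.exists_nat_subset_range
  have hsub : hfin.toFinset ⊆ (Finset.range m).filter (fun k => ε < ‖g k‖) := by
    intro k hk
    exact Finset.mem_filter.mpr ⟨htm hk, hfin.mem_toFinset.mp hk⟩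
  have hcard : (Nat.card {k : ℕ | ε < ‖g k‖} : ℝ) ≤
      ((Finset.range m).filter (fun k => ε < ‖g k‖)).card := by
    rw [Nat.card_eq_card_finite_toFinset hfin]
    exact_mod_cast Finset.card_le_card hsub
  have h1 : (Nat.card {k : ℕ | ε < ‖g k‖} : ℝ) * (C * ε ^ 2) ≤ f 0 - flow := by
    have hb := bound m
    have hmul := mul_le_mul_of_nonneg_right hcard (le_of_lt (show (0:ℝ) < C * ε ^ 2 by positivity))
    nlinarith
  have hC2 : C = 2 * δ * γ * (1 - γ) * c₁ ^ 2 / (L * c₂ ^ 2) := by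
    rw [hCdef, hη₀def]; ring
  have heq : L * c₂ ^ 2 * (f 0 - flow) / (2 * δ * γ * (1 - γ) * c₁ ^ 2) * ε⁻¹ ^ 2
      = (f 0 - flow) / (C * ε ^ 2) := by
    rw [hC2]
    exact aux_div_identity (L * c₂ ^ 2) (2 * δ * γ * (1 - γ) * c₁ ^ 2) (f 0 - flow) ε
      (by positivity) (by positivity) (ne_of_gt hε)
  rw [heq, le_div_iff₀ (by positivity)]
  exact h1
end

section
/- Let E be a real inner product space, let f : ℕ → ℝ and g, d : ℕ → E, and let f_low ∈ ℝ, γ ∈ (0,1), 0 < c₁ ≤ c₂, L > 0 with L ≤ 2(1−γ)c₁/c₂², and ε > 0. Assume for every k: f(k) ≥ f_low, the gradient-related conditions ⟨g(k), d(k)⟩ ≤ −c₁‖g(k)‖² and ‖d(k)‖ ≤ c₂‖g(k)‖, and the Lipschitz-type model condition |f(k+1) − f(k) − ⟨g(k), d(k)⟩| ≤ (L/2)‖d(k)‖². Then the set {k ∈ ℕ : ‖g(k)‖ > ε} is finite and its cardinality is at most (f(0) − f_low)/(γ c₁) · ε⁻². -/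
open scoped RealInnerProductSpace

/-- With unit step sizes, gradient-related directions, the Lipschitz-type
model condition with `L ≤ 2(1-γ)c₁/c₂²`, and the objective bounded below, the set of
iterations with `‖g k‖ > ε` is finite with cardinality at most `(f 0 - f_low)/(γ c₁) · ε⁻²`. -/
theorem card_large_grad_iterations_bound_unit_step
    {E : Type*} [NormedAddCommGroup E] [InnerProductSpace ℝ E]
    (f : ℕ → ℝ) (g d : ℕ → E)
    (flow : ℝ) (γ c₁ c₂ L ε : ℝ)
    (hγ : γ ∈ Set.Ioo (0 : ℝ) 1)
    (hc₁ : 0 < c₁) (hc₁₂ : c₁ ≤ c₂) (hL : 0 < L)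
    (hLsmall : L ≤ 2 * (1 - γ) * c₁ / c₂ ^ 2) (hε : 0 < ε)
    (hflow : ∀ k, flow ≤ f k)
    (hgr₁ : ∀ k, ⟪g k, d k⟫ ≤ -c₁ * ‖g k‖ ^ 2)
    (hgr₂ : ∀ k, ‖d k‖ ≤ c₂ * ‖g k‖)
    (hlip : ∀ k, |f (k + 1) - f k - ⟪g k, d k⟫| ≤ L / 2 * ‖d k‖ ^ 2) :
    {k : ℕ | ε < ‖g k‖}.Finite ∧
      (Nat.card {k : ℕ | ε < ‖g k‖} : ℝ) ≤ (f 0 - flow) / (γ * c₁) * ε⁻¹ ^ 2 := by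
  obtain ⟨hγ0, hγ1⟩ := hγ
  have hc₂ : 0 < c₂ := lt_of_lt_of_le hc₁ hc₁₂
  have hγc₁ : 0 < γ * c₁ := mul_pos hγ0 hc₁
  -- per-step decrease
  have key : ∀ k, γ * c₁ * ‖g k‖ ^ 2 ≤ f k - f (k + 1) := by
    intro k
    have h1 : f (k + 1) - f k - ⟪g k, d k⟫ ≤ L / 2 * ‖d k‖ ^ 2 :=
      (abs_le.mp (hlip k)).2
    have hd2 : ‖d k‖ ^ 2 ≤ c₂ ^ 2 * ‖g k‖ ^ 2 := by
      have := hgr₂ k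
      have h0 : (0:ℝ) ≤ ‖d k‖ := norm_nonneg _
      nlinarith [norm_nonneg (g k)]
    have h2 : L / 2 * ‖d k‖ ^ 2 ≤ (1 - γ) * c₁ * ‖g k‖ ^ 2 := by
      have hL2 : L * c₂ ^ 2 ≤ 2 * (1 - γ) * c₁ := by
        have := (div_le_iff₀ (by positivity : (0:ℝ) < c₂ ^ 2)).mp
          (le_of_eq rfl : 2 * (1 - γ) * c₁ / c₂ ^ 2 ≤ 2 * (1 - γ) * c₁ / c₂ ^ 2)
        nlinarith [ (le_div_iff₀ (by positivity : (0:ℝ) < c₂ ^ 2)).mp hLsmall ]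
      nlinarith [hd2, sq_nonneg (‖g k‖), hL.le]
    have h3 := hgr₁ k
    nlinarith
  -- telescoping sum
  have tel : ∀ n : ℕ, γ * c₁ * ∑ k ∈ Finset.range n, ‖g k‖ ^ 2 ≤ f 0 - flow := by
    intro n
    have : γ * c₁ * ∑ k ∈ Finset.range n, ‖g k‖ ^ 2 ≤ f 0 - f n := by
      induction n with
      | zero => simp
      | succ n ih =>
        rw [Finset.sum_range_succ, mul_add]
        have := key n
        linarith
    linarith [hflow n]
  -- bound on cardinality of any finset of large-gradient indices
  have bound : ∀ t : Finset ℕ, (∀ k ∈ t, ε < ‖g k‖) →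
      (t.card : ℝ) ≤ (f 0 - flow) / (γ * c₁) * ε⁻¹ ^ 2 := by
    intro t ht
    obtain ⟨n, hn⟩ := t.exists_nat_subset_range
    have hsum : (t.card : ℝ) * ε ^ 2 ≤ ∑ k ∈ Finset.range n, ‖g k‖ ^ 2 := by
      calc (t.card : ℝ) * ε ^ 2 = ∑ _k ∈ t, ε ^ 2 := by
            rw [Finset.sum_const, nsmul_eq_mul]
        _ ≤ ∑ k ∈ t, ‖g k‖ ^ 2 := by
            apply Finset.sum_le_sum
            intro k hk
            exact pow_le_pow_left₀ hε.le (ht k hk).le 2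
        _ ≤ ∑ k ∈ Finset.range n, ‖g k‖ ^ 2 := by
            apply Finset.sum_le_sum_of_subset_of_nonneg hn
            intro i _ _
            positivity
    have h := tel n
    have h2 : γ * c₁ * ((t.card : ℝ) * ε ^ 2) ≤ f 0 - flow := by nlinarith
    rw [inv_pow, ← div_eq_mul_inv, div_div, le_div_iff₀ (by positivity)]
    nlinarith
  have hfin : {k : ℕ | ε < ‖g k‖}.Finite := by
    by_contra hinf
    obtain ⟨t, hts, htc⟩ := Set.Infinite.exists_subset_card_eq hinf
      (⌈(f 0 - flow) / (γ * c₁) * ε⁻¹ ^ 2⌉₊ + 1)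
    have hb := bound t (fun k hk => hts hk)
    rw [htc] at hb
    have hce := Nat.le_ceil ((f 0 - flow) / (γ * c₁) * ε⁻¹ ^ 2)
    push_cast at hb
    linarith
  refine ⟨hfin, ?_⟩
  have hb := bound hfin.toFinset (fun k hk => hfin.mem_toFinset.mp hk)
  rwa [Nat.card_coe_set_eq, Set.ncard_eq_toFinset_card _ hfin]
end

section
/- Let E be a real inner product space, let B : E → E be a continuous linear map that is self-adjoint and positive definite, and let g, s ∈ E be linearly independent. Then there exists a unique pair (α, β) ∈ ℝ² minimizing the function (α, β) ↦ −α‖g‖² + β⟨g, s⟩ + (1/2)(α²⟨g, B g⟩ − 2αβ⟨g, B s⟩ + β²⟨s, B s⟩) over ℝ². -/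
open scoped RealInnerProductSpace

/-! Substituting `d = -α • g + β • s` turns the objective into `⟪g, d⟫ + ⟪d, B d⟫ / 2`, so the
Hessian `H` of the two-variable quadratic is the Gram form of `B` on the pair `(g, s)`. Linear
independence and positivity of `B` make `H` positive definite; in particular `det H ≠ 0`, so the
stationary point exists (Cramer's rule), and the objective exceeds its value there by
`(q - p)ᵀ H (q - p) / 2`, which vanishes only at `q = p`. -/

theorem existsUnique_forall_le_of_sub_eq {V : Type*} [AddGroup V] (f Q : V → ℝ)
    (hQ : ∀ v, v ≠ 0 → 0 < Q v) (p : V) (hf : ∀ q, f q - f p = Q (q - p)) :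
    ∃! p, ∀ q, f p ≤ f q := by
  have hle : ∀ q, f p ≤ f q := fun q => by
    by_cases hq : q = p
    · rw [hq]
    · linarith [hf q, hQ (q - p) (sub_ne_zero.mpr hq)]
  refine ⟨p, hle, fun q hq => ?_⟩
  by_contra hne
  linarith [hq p, hf q, hQ (q - p) (sub_ne_zero.mpr hne)]

/-- The form `(x, y) ↦ (x, y) H (x, y)ᵀ` with `H = [[a, -b], [-b, c]]`. -/
def twoDimQuadForm (a b c : ℝ) (v : ℝ × ℝ) : ℝ :=
  v.1 ^ 2 * a - 2 * v.1 * v.2 * b + v.2 ^ 2 * c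

/-- The objective `Tᵀv + vᵀHv / 2` with `T = (-G, P)`. -/
noncomputable def twoDimModel (a b c G P : ℝ) (v : ℝ × ℝ) : ℝ :=
  -v.1 * G + v.2 * P + (1 / 2) * twoDimQuadForm a b c v

noncomputable def twoDimStationaryPoint (a b c G P : ℝ) : ℝ × ℝ :=
  ((G * c - b * P) / (a * c - b ^ 2), (b * G - a * P) / (a * c - b ^ 2))

section TwoDim

variable {a b c : ℝ}

theorem det_pos_of_twoDimQuadForm_pos (h : ∀ v : ℝ × ℝ, v ≠ 0 → 0 < twoDimQuadForm a b c v) :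
    0 < a * c - b ^ 2 := by
  have ha : 0 < a := by simpa [twoDimQuadForm] using h (1, 0) (by simp)
  have hba : 0 < twoDimQuadForm a b c (b, a) := h (b, a) (by simp [ha.ne'])
  have hba_eq : twoDimQuadForm a b c (b, a) = a * (a * c - b ^ 2) := by
    simp only [twoDimQuadForm]; ring
  exact pos_of_mul_pos_right (hba_eq ▸ hba) ha.le

theorem twoDimModel_sub_stationaryPoint (G P : ℝ) (hdet : a * c - b ^ 2 ≠ 0) (q : ℝ × ℝ) :
    twoDimModel a b c G P q - twoDimModel a b c G P (twoDimStationaryPoint a b c G P) =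
      (1 / 2) * twoDimQuadForm a b c (q - twoDimStationaryPoint a b c G P) := by
  simp only [twoDimModel, twoDimQuadForm, twoDimStationaryPoint, Prod.fst_sub, Prod.snd_sub]
  field_simp
  ring

theorem existsUnique_twoDimModel_minimizer (G P : ℝ)
    (h : ∀ v : ℝ × ℝ, v ≠ 0 → 0 < twoDimQuadForm a b c v) :
    ∃! p, ∀ q, twoDimModel a b c G P p ≤ twoDimModel a b c G P q :=
  existsUnique_forall_le_of_sub_eq _ (fun v => (1 / 2) * twoDimQuadForm a b c v)
    (fun v hv => by linarith [h v hv]) _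
    (twoDimModel_sub_stationaryPoint G P (det_pos_of_twoDimQuadForm_pos h).ne')

end TwoDim

section InnerProduct

variable {E : Type*} [NormedAddCommGroup E] [InnerProductSpace ℝ E] {B : E →L[ℝ] E} {g s : E}

theorem inner_smul_sub_smul_apply (hB_sa : ∀ u v : E, ⟪u, B v⟫ = ⟪B u, v⟫) (v : ℝ × ℝ) :
    ⟪v.1 • g - v.2 • s, B (v.1 • g - v.2 • s)⟫ =
      twoDimQuadForm ⟪g, B g⟫ ⟪g, B s⟫ ⟪s, B s⟫ v := by
  have hsg : ⟪s, B g⟫ = ⟪g, B s⟫ := by rw [hB_sa, real_inner_comm]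
  simp only [map_sub, map_smul, inner_sub_left, inner_sub_right, real_inner_smul_left,
    real_inner_smul_right, hsg, twoDimQuadForm]
  ring

theorem twoDimQuadForm_gram_pos (hB_sa : ∀ u v : E, ⟪u, B v⟫ = ⟪B u, v⟫)
    (hB_pd : ∀ v : E, v ≠ 0 → 0 < ⟪v, B v⟫) (hind : LinearIndependent ℝ ![g, s])
    (v : ℝ × ℝ) (hv : v ≠ 0) : 0 < twoDimQuadForm ⟪g, B g⟫ ⟪g, B s⟫ ⟪s, B s⟫ v := by
  rw [← inner_smul_sub_smul_apply hB_sa]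
  refine hB_pd _ fun h0 => hv ?_
  obtain ⟨h1, h2⟩ := LinearIndependent.pair_iff.mp hind v.1 (-v.2) (by
    rwa [neg_smul, ← sub_eq_add_neg])
  exact Prod.ext h1 (neg_eq_zero.mp h2)

end InnerProduct

/-- For a self-adjoint positive-definite continuous linear map `B` and linearly
independent `g, s`, the two-dimensional reformulation of the quadratic model has a unique
minimizing pair `(α, β) ∈ ℝ²`. -/
theorem two_dim_quadratic_unique_minimizer
    {E : Type*} [NormedAddCommGroup E] [InnerProductSpace ℝ E]
    (B : E →L[ℝ] E)
    (hB_sa : ∀ u v : E, ⟪u, B v⟫ = ⟪B u, v⟫)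
    (hB_pd : ∀ v : E, v ≠ 0 → 0 < ⟪v, B v⟫)
    (g s : E) (hind : LinearIndependent ℝ ![g, s]) :
    ∃! p : ℝ × ℝ, ∀ q : ℝ × ℝ,
      -p.1 * ‖g‖ ^ 2 + p.2 * ⟪g, s⟫ +
          (1 / 2) * (p.1 ^ 2 * ⟪g, B g⟫ - 2 * p.1 * p.2 * ⟪g, B s⟫ + p.2 ^ 2 * ⟪s, B s⟫) ≤
        -q.1 * ‖g‖ ^ 2 + q.2 * ⟪g, s⟫ +
          (1 / 2) * (q.1 ^ 2 * ⟪g, B g⟫ - 2 * q.1 * q.2 * ⟪g, B s⟫ + q.2 ^ 2 * ⟪s, B s⟫) :=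
  existsUnique_twoDimModel_minimizer (‖g‖ ^ 2) ⟪g, s⟫
    (twoDimQuadForm_gram_pos hB_sa hB_pd hind)
end

section
/- Let E be a real inner product space, let 0 < m ≤ M, let B : E → E be a continuous linear self-adjoint map with m‖v‖² ≤ ⟨v, B v⟩ ≤ M‖v‖² for all v ∈ E, let g, s ∈ E, and let d* be a minimizer of the quadratic model q(d) = ⟨g, d⟩ + (1/2)⟨d, B d⟩ over the subspace {−α g + β s : α, β ∈ ℝ}. Then d* is gradient-related to g with constants c₁ = 1/(2M) and c₂ = 2/m, i.e. ⟨g, d*⟩ ≤ −(1/(2M))‖g‖² and ‖d*‖ ≤ (2/m)‖g‖. -/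
open scoped RealInnerProductSpace

/-- If the self-adjoint map `B` has its quadratic form bounded between
`m‖·‖²` and `M‖·‖²` with `0 < m ≤ M`, then any minimizer `d*` of the quadratic model over
the subspace `{-α g + β s}` is gradient-related to `g` with constants `c₁ = 1/(2M)` and
`c₂ = 2/m`. -/
theorem minimizer_is_gradient_related
    {E : Type*} [NormedAddCommGroup E] [InnerProductSpace ℝ E]
    (m M : ℝ) (hm : 0 < m) (hmM : m ≤ M)
    (B : E →L[ℝ] E)
    (hB_sa : ∀ u v : E, ⟪u, B v⟫ = ⟪B u, v⟫)
    (hB_bounds : ∀ v : E, m * ‖v‖ ^ 2 ≤ ⟪v, B v⟫ ∧ ⟪v, B v⟫ ≤ M * ‖v‖ ^ 2)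
    (g s : E) (dstar : E)
    (hmin : ∃ α β : ℝ, dstar = -α • g + β • s ∧
      ∀ α' β' : ℝ,
        ⟪g, dstar⟫ + (1 / 2) * ⟪dstar, B dstar⟫ ≤
          ⟪g, -α' • g + β' • s⟫ + (1 / 2) * ⟪-α' • g + β' • s, B (-α' • g + β' • s)⟫) :
    ⟪g, dstar⟫ ≤ -(1 / (2 * M)) * ‖g‖ ^ 2 ∧ ‖dstar‖ ≤ 2 / m * ‖g‖ := by
  obtain ⟨α, β, hd, hq⟩ := hmin
  have hM : 0 < M := lt_of_lt_of_le hm hmM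
  set a := ⟪g, dstar⟫ with ha
  set b := ⟪dstar, B dstar⟫ with hb
  have hbm : m * ‖dstar‖ ^ 2 ≤ b := (hB_bounds dstar).1
  have hb0 : (0:ℝ) ≤ b := le_trans (by positivity) hbm
  -- Step 1: q(d*) ≤ -(1/(2M))‖g‖²
  have hstep1 : a + (1/2) * b ≤ -(1/(2*M)) * ‖g‖^2 := by
    have h := hq (1/M) 0
    have e1 : (-(1/M) • g + (0:ℝ) • s) = (-(1/M) : ℝ) • g := by
      simp
    rw [e1] at h
    have e2 : ⟪g, (-(1/M):ℝ) • g⟫ = -(1/M) * ‖g‖^2 := by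
      rw [real_inner_smul_right, real_inner_self_eq_norm_sq]
    have e3 : ⟪(-(1/M):ℝ) • g, B ((-(1/M):ℝ) • g)⟫ = (1/M)^2 * ⟪g, B g⟫ := by
      rw [map_smul, real_inner_smul_left, real_inner_smul_right]; ring
    rw [e2, e3] at h
    have hgB : ⟪g, B g⟫ ≤ M * ‖g‖^2 := (hB_bounds g).2
    have hM' : M ≠ 0 := ne_of_gt hM
    calc a + (1/2) * b ≤ -(1/M) * ‖g‖^2 + 1/2 * ((1/M)^2 * ⟪g, B g⟫) := h
      _ ≤ -(1/M) * ‖g‖^2 + 1/2 * ((1/M)^2 * (M * ‖g‖^2)) := by nlinarith [sq_nonneg (1/M)]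
      _ = -(1/(2*M)) * ‖g‖^2 := by field_simp; ring
  have hfirst : a ≤ -(1/(2*M)) * ‖g‖^2 := by linarith
  -- Step 2: scaling inequality
  have hscale : ∀ t : ℝ, a + (1/2) * b ≤ t * a + (1/2) * (t^2 * b) := by
    intro t
    have h := hq (t*α) (t*β)
    have e1 : (-(t*α) • g + (t*β) • s) = t • dstar := by
      rw [hd]; module
    rw [e1] at h
    have e2 : ⟪g, t • dstar⟫ = t * a := real_inner_smul_right g dstar t
    have e3 : ⟪t • dstar, B (t • dstar)⟫ = t^2 * b := by
      rw [map_smul, real_inner_smul_left, real_inner_smul_right]; ring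
    rw [e2, e3] at h
    exact h
  -- conclude
  refine ⟨hfirst, ?_⟩
  by_cases hd0 : dstar = 0
  · rw [hd0]; simp; positivity
  · have hnd : 0 < ‖dstar‖ := norm_pos_iff.mpr hd0
    have hbpos : 0 < b := lt_of_lt_of_le (by positivity) hbm
    have hab : a + b = 0 := by
      have h := hscale (1 - (a+b)/b)
      have hb' : b ≠ 0 := ne_of_gt hbpos
      have key : (1 - (a+b)/b) * a + 1/2 * ((1 - (a+b)/b)^2 * b)
          = a + 1/2*b - (a+b)^2/(2*b) := by
        field_simp; ring
      rw [key] at h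
      have h5 : (a+b)^2/(2*b) ≤ 0 := by linarith
      have h6 : (a+b)^2 ≤ 0 := by
        rcases div_nonpos_iff.mp h5 with ⟨_, h7⟩ | ⟨h7, _⟩
        · linarith
        · exact h7
      have h8 : (a+b)^2 = 0 := le_antisymm h6 (sq_nonneg _)
      exact pow_eq_zero_iff (two_ne_zero) |>.mp h8
    have hcs : -a ≤ ‖g‖ * ‖dstar‖ := by
      linarith [abs_real_inner_le_norm g dstar, neg_abs_le a]
    have h3 : m * ‖dstar‖ ≤ ‖g‖ := by nlinarith
    rw [div_mul_eq_mul_div, le_div_iff₀ hm]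
    nlinarith [norm_nonneg g]
end

section
/- Let E be a real inner product space, let B : E → E be a continuous linear map that is self-adjoint and positive definite, let g, s ∈ E with g ≠ 0, and let d* be a minimizer of the quadratic model q(d) = ⟨g, d⟩ + (1/2)⟨d, B d⟩ over the subspace {−α g + β s : α, β ∈ ℝ}. Then d* is a descent direction: ⟨g, d*⟩ < 0. -/
open scoped RealInnerProductSpace

/-- For a self-adjoint positive-definite continuous linear map `B` and `g ≠ 0`,
any minimizer `d*` of the quadratic model over the subspace `{-α g + β s}` is a descent
direction: `⟪g, d*⟫ < 0`. -/
theorem minimizer_is_descent_direction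
    {E : Type*} [NormedAddCommGroup E] [InnerProductSpace ℝ E]
    (B : E →L[ℝ] E)
    (hB_sa : ∀ u v : E, ⟪u, B v⟫ = ⟪B u, v⟫)
    (hB_pd : ∀ v : E, v ≠ 0 → 0 < ⟪v, B v⟫)
    (g s : E) (hg : g ≠ 0) (dstar : E)
    (hmin : ∃ α β : ℝ, dstar = -α • g + β • s ∧
      ∀ α' β' : ℝ,
        ⟪g, dstar⟫ + (1 / 2) * ⟪dstar, B dstar⟫ ≤
          ⟪g, -α' • g + β' • s⟫ + (1 / 2) * ⟪-α' • g + β' • s, B (-α' • g + β' • s)⟫) :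
    ⟪g, dstar⟫ < 0 := by
  obtain ⟨α, β, hd, hle⟩ := hmin
  set a : ℝ := ⟪g, g⟫ with ha
  set b : ℝ := ⟪g, B g⟫ with hb
  have ha_pos : 0 < a := by
    rw [ha, real_inner_self_eq_norm_sq]
    exact pow_pos (norm_pos_iff.mpr hg) 2
  have hb_pos : 0 < b := hB_pd g hg
  set t : ℝ := a / b with ht
  have ht_pos : 0 < t := div_pos ha_pos hb_pos
  have key := hle t 0
  have hrw : -t • g + (0:ℝ) • s = (-t) • g := by
    simp [neg_smul]
  rw [hrw] at key
  have hval : ⟪g, (-t) • g⟫ + (1/2) * ⟪(-t) • g, B ((-t) • g)⟫ = -t * a + (1/2) * (t^2 * b) := by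
    rw [real_inner_smul_right, map_smul, real_inner_smul_left, real_inner_smul_right]
    ring
  rw [hval] at key
  have hneg : -t * a + (1/2) * (t^2 * b) < 0 := by
    have : t * b = a := div_mul_cancel₀ a hb_pos.ne'
    nlinarith
  have hq : ⟪g, dstar⟫ + (1/2) * ⟪dstar, B dstar⟫ < 0 := lt_of_le_of_lt key hneg
  have hdd : 0 ≤ ⟪dstar, B dstar⟫ := by
    by_cases h : dstar = 0
    · simp [h]
    · exact (hB_pd dstar h).le
  linarith
end

section
/- Let E be a real inner product space, let s, y ∈ E with s ≠ 0 and ⟨s, y⟩ > 0, and let λ > 0. Define the memoryless BFGS operator B : E → E by B(d) = (1/λ)(d − (⟨s, d⟩/‖s‖²) s) + (⟨y, d⟩/⟨s, y⟩) y. Then B is positive definite: ⟨d, B d⟩ > 0 for every d ∈ E with d ≠ 0. -/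
/-!
Split `d = w + c • s` with `w ⟂ s`. Then `⟪d, B d⟫ = ‖w‖² / λ + ⟪y, d⟫² / ⟪s, y⟫`, a sum of two
nonnegative terms. The first vanishes only when `d` is a multiple `c • s` with `c ≠ 0`, and then
`⟪y, d⟫ = c ⟪s, y⟫ ≠ 0` makes the second positive.
-/

open scoped RealInnerProductSpace

section OrthComponent

variable {E : Type*} [NormedAddCommGroup E] [InnerProductSpace ℝ E]

/-- Equal to `d` when `s = 0`, where the coefficient is `0 / 0 = 0`. -/
noncomputable def orthComponent (s d : E) : E := d - (⟪s, d⟫ / ‖s‖ ^ 2) • s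

theorem inner_orthComponent_right (s d : E) : ⟪s, orthComponent s d⟫ = 0 := by
  have hcancel : ⟪s, d⟫ / ‖s‖ ^ 2 * ‖s‖ ^ 2 = ⟪s, d⟫ :=
    div_mul_cancel_of_imp fun h => by
      rw [← real_inner_self_eq_norm_sq, inner_self_eq_zero] at h
      simp [h]
  rw [orthComponent, inner_sub_right, real_inner_smul_right, real_inner_self_eq_norm_sq, hcancel,
    sub_self]

theorem inner_orthComponent_self (s d : E) :
    ⟪d, orthComponent s d⟫ = ‖orthComponent s d‖ ^ 2 := by
  set w := orthComponent s d with hw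
  have hsw : ⟪s, w⟫ = 0 := inner_orthComponent_right s d
  have hd : d = w + (⟪s, d⟫ / ‖s‖ ^ 2) • s := by rw [hw, orthComponent, sub_add_cancel]
  rw [hd, inner_add_left, real_inner_smul_left, real_inner_comm, hsw,
    real_inner_self_eq_norm_sq, mul_zero, add_zero]

theorem inner_ne_zero_of_orthComponent_eq_zero {s y d : E} (hw : orthComponent s d = 0)
    (hd : d ≠ 0) (hsy : ⟪s, y⟫ ≠ 0) : ⟪y, d⟫ ≠ 0 := by
  set c := ⟪s, d⟫ / ‖s‖ ^ 2
  have hdc : d = c • s := sub_eq_zero.mp hw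
  have hc : c ≠ 0 := by
    rintro hc
    rw [hc, zero_smul] at hdc
    exact hd hdc
  rw [hdc, real_inner_smul_right, real_inner_comm]
  exact mul_ne_zero hc hsy

end OrthComponent

theorem memorylessBFGS_posDef_general
    {E : Type*} [NormedAddCommGroup E] [InnerProductSpace ℝ E]
    (s y : E) (hsy : 0 < ⟪s, y⟫) (lam : ℝ) (hlam : 0 < lam)
    (B : E → E)
    (hB : ∀ d : E, B d = (1 / lam) • (d - (⟪s, d⟫ / ‖s‖ ^ 2) • s) + (⟪y, d⟫ / ⟪s, y⟫) • y) :
    ∀ d : E, d ≠ 0 → 0 < ⟪d, B d⟫ := by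
  intro d hd
  set w := orthComponent s d
  have hquad : ⟪d, B d⟫ = (1 / lam) * ‖w‖ ^ 2 + ⟪y, d⟫ ^ 2 / ⟪s, y⟫ := by
    rw [hB d, inner_add_right, real_inner_smul_right, real_inner_smul_right,
      ← orthComponent, inner_orthComponent_self, real_inner_comm d y]
    ring
  rw [hquad]
  by_cases hw : w = 0
  · have hyd : ⟪y, d⟫ ≠ 0 := inner_ne_zero_of_orthComponent_eq_zero hw hd hsy.ne'
    positivity
  · have : 0 < ‖w‖ := norm_pos_iff.mpr hw
    positivity

/-- The memoryless BFGS operator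
`B(d) = (1/λ)(d - (⟪s, d⟫/‖s‖²) s) + (⟪y, d⟫/⟪s, y⟫) y` is positive definite. -/
theorem memorylessBFGS_posDef
    {E : Type*} [NormedAddCommGroup E] [InnerProductSpace ℝ E]
    (s y : E) (hs : s ≠ 0) (hsy : 0 < ⟪s, y⟫) (lam : ℝ) (hlam : 0 < lam)
    (B : E → E)
    (hB : ∀ d : E, B d = (1 / lam) • (d - (⟪s, d⟫ / ‖s‖ ^ 2) • s) + (⟪y, d⟫ / ⟪s, y⟫) • y) :
    ∀ d : E, d ≠ 0 → 0 < ⟪d, B d⟫ :=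
  memorylessBFGS_posDef_general s y hsy lam hlam B hB
end

section
/- Let E be a real inner product space, let g, s, y ∈ E with s ≠ 0, ⟨s, y⟩ > 0, and g, s linearly independent, and let λ > 0. Define the memoryless BFGS operator B : E → E by B(d) = (1/λ)(d − (⟨s, d⟩/‖s‖²) s) + (⟨y, d⟩/⟨s, y⟩) y, and set ρ = ⟨g, B g⟩, α = λ(‖g‖²⟨s, y⟩ − ⟨g, y⟩⟨g, s⟩)/(⟨s, y⟩(‖g‖² − ⟨g, s⟩²/‖s‖²)), and β = (α⟨g, y⟩ − ⟨g, s⟩)/⟨s, y⟩. Then (α, β) solves the 2×2 linear system: ρ·α − ⟨g, y⟩·β = ‖g‖² and −⟨g, y⟩·α + ⟨s, y⟩·β = −⟨g, s⟩. -/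
open scoped RealInnerProductSpace

/-!
Expanding `⟪g, B g⟫` gives the closed form `(‖g‖²‖s‖² - ⟪g, s⟫²) / (λ‖s‖²) + ⟪g, y⟫² / ⟪s, y⟫`,
after which both equations are rational identities in the scalars. Their only denominators
besides `λ` and `⟪s, y⟫` are `‖s‖²` and the Gram determinant `‖g‖²‖s‖² - ⟪g, s⟫²`, which are
nonzero because `g` and `s` are linearly independent (strict Cauchy–Schwarz).
-/

section

variable {F : Type*} [NormedAddCommGroup F] [InnerProductSpace ℝ F]

theorem real_inner_sq_lt_of_linearIndependent {x y : F} (h : LinearIndependent ℝ ![x, y]) :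
    ⟪x, y⟫ ^ 2 < ‖x‖ ^ 2 * ‖y‖ ^ 2 := by
  obtain ⟨hy, hx⟩ : y ≠ 0 ∧ ∀ a : ℝ, a • y ≠ x := by simpa using linearIndependent_fin2.1 h
  have hne : |⟪x, y⟫| ≠ ‖x‖ * ‖y‖ := fun heq => by
    have hcol := ((norm_inner_eq_norm_tfae ℝ y x).out 0 2).1
      (by rw [Real.norm_eq_abs, real_inner_comm, heq, mul_comm])
    obtain ⟨r, hr⟩ := hcol.resolve_left hy
    exact hx r hr.symm
  rw [← sq_abs, ← mul_pow]
  exact pow_lt_pow_left₀ ((abs_real_inner_le_norm x y).lt_of_ne hne) (abs_nonneg _) two_ne_zero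

noncomputable def memorylessBFGS (lam : ℝ) (s y d : F) : F :=
  (1 / lam) • (d - (⟪s, d⟫ / ‖s‖ ^ 2) • s) + (⟪y, d⟫ / ⟪s, y⟫) • y

theorem inner_memorylessBFGS_self {s : F} (hs : s ≠ 0) (lam : ℝ) (y d : F) :
    ⟪d, memorylessBFGS lam s y d⟫ =
      (‖d‖ ^ 2 * ‖s‖ ^ 2 - ⟪d, s⟫ ^ 2) / (lam * ‖s‖ ^ 2) + ⟪d, y⟫ ^ 2 / ⟪s, y⟫ := by
  have hs' : ‖s‖ ≠ 0 := norm_ne_zero_iff.2 hs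
  simp only [memorylessBFGS, inner_add_right, inner_smul_right, inner_sub_right,
    real_inner_self_eq_norm_sq, real_inner_comm d s, real_inner_comm d y]
  field_simp

end

theorem explicit_coefficients_solve_system_general
    {E : Type*} [NormedAddCommGroup E] [InnerProductSpace ℝ E]
    (g s y : E) (hsy : 0 < ⟪s, y⟫)
    (hind : LinearIndependent ℝ ![g, s])
    (lam : ℝ) (hlam : 0 < lam)
    (B : E → E)
    (hB : ∀ d : E, B d = (1 / lam) • (d - (⟪s, d⟫ / ‖s‖ ^ 2) • s) + (⟪y, d⟫ / ⟪s, y⟫) • y)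
    (ρ α β : ℝ)
    (hρ : ρ = ⟪g, B g⟫)
    (hα : α = lam * (‖g‖ ^ 2 * ⟪s, y⟫ - ⟪g, y⟫ * ⟪g, s⟫) /
      (⟪s, y⟫ * (‖g‖ ^ 2 - ⟪g, s⟫ ^ 2 / ‖s‖ ^ 2)))
    (hβ : β = (α * ⟪g, y⟫ - ⟪g, s⟫) / ⟪s, y⟫) :
    ρ * α - ⟪g, y⟫ * β = ‖g‖ ^ 2 ∧ -⟪g, y⟫ * α + ⟪s, y⟫ * β = -⟪g, s⟫ := by
  have hs : s ≠ 0 := by simpa using hind.ne_zero 1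
  have hs' : ‖s‖ ≠ 0 := norm_ne_zero_iff.2 hs
  have hgram : ‖g‖ ^ 2 * ‖s‖ ^ 2 - ⟪g, s⟫ ^ 2 ≠ 0 :=
    (sub_pos.2 (real_inner_sq_lt_of_linearIndependent hind)).ne'
  have hρ' : ρ = (‖g‖ ^ 2 * ‖s‖ ^ 2 - ⟪g, s⟫ ^ 2) / (lam * ‖s‖ ^ 2) + ⟪g, y⟫ ^ 2 / ⟪s, y⟫ := by
    rw [hρ, hB]
    exact inner_memorylessBFGS_self hs lam y g
  subst hρ' hβ hα
  have hsy' := hsy.ne'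
  have hlam' := hlam.ne'
  constructor
  · field_simp
    ring
  · field_simp
    ring

/-- With the memoryless BFGS operator `B`, `ρ = ⟪g, B g⟫`, and the explicit
formulae for `α` and `β`, the pair `(α, β)` solves the 2×2 optimality system
`ρ·α - ⟪g, y⟫·β = ‖g‖²`, `-⟪g, y⟫·α + ⟪s, y⟫·β = -⟪g, s⟫`. -/
theorem explicit_coefficients_solve_system
    {E : Type*} [NormedAddCommGroup E] [InnerProductSpace ℝ E]
    (g s y : E) (hs : s ≠ 0) (hsy : 0 < ⟪s, y⟫)
    (hind : LinearIndependent ℝ ![g, s])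
    (lam : ℝ) (hlam : 0 < lam)
    (B : E → E)
    (hB : ∀ d : E, B d = (1 / lam) • (d - (⟪s, d⟫ / ‖s‖ ^ 2) • s) + (⟪y, d⟫ / ⟪s, y⟫) • y)
    (ρ α β : ℝ)
    (hρ : ρ = ⟪g, B g⟫)
    (hα : α = lam * (‖g‖ ^ 2 * ⟪s, y⟫ - ⟪g, y⟫ * ⟪g, s⟫) /
      (⟪s, y⟫ * (‖g‖ ^ 2 - ⟪g, s⟫ ^ 2 / ‖s‖ ^ 2)))
    (hβ : β = (α * ⟪g, y⟫ - ⟪g, s⟫) / ⟪s, y⟫) :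
    ρ * α - ⟪g, y⟫ * β = ‖g‖ ^ 2 ∧ -⟪g, y⟫ * α + ⟪s, y⟫ * β = -⟪g, s⟫ :=
  explicit_coefficients_solve_system_general g s y hsy hind lam hlam B hB ρ α β hρ hα hβ
end
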